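/- Every proper level-2 network is tree-based. -/

import Mathlib

open SimpleGraph

/-- Degree of a vertex (as the cardinality of its neighbour set). -/
noncomputable def deg {W : Type*} (G : SimpleGraph W) (v : W) : ℕ :=
  (G.neighborSet v).ncard

/-- `T` is a support-tree for `G` with leaf set `X`: a spanning tree of `G`
whose leaves (vertices of degree at most 1) are exactly `X`. -/
def IsSupportTree {W : Type*} (G T : SimpleGraph W) (X : Set W) : Prop :=
  T ≤ G ∧ T.IsTree ∧ {v | deg T v ≤ 1} = X

/-- A graph is tree-based on `X` if it has a support-tree with leaf set `X`. -/
def TreeBased {W : Type*} (G : SimpleGraph W) (X : Set W) : Prop :=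
  ∃ T, IsSupportTree G T X

/-- An unrooted phylogenetic network on `X`: a connected graph all of whose
vertices have degree 1 or 3 (allowing the single-vertex convention via `≤ 1`),
whose leaves are exactly `X`. -/
def IsNetwork {W : Type*} (G : SimpleGraph W) (X : Set W) : Prop :=
  G.Connected ∧ (∀ v, deg G v ≤ 1 ∨ deg G v = 3) ∧ {v | deg G v ≤ 1} = X

/-- The cut-edge `{u,v}` induces a split of `X`: each side of the deleted edge
contains an element of `X`. -/
def InducesSplit {W : Type*} (G : SimpleGraph W) (X : Set W) (u v : W) : Prop :=
  (∃ a ∈ X, (G.deleteEdges {s(u, v)}).Reachable u a) ∧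
    ∃ b ∈ X, (G.deleteEdges {s(u, v)}).Reachable v b

/-- A network is proper if every cut-edge induces a split of `X`. -/
def ProperNet {W : Type*} (G : SimpleGraph W) (X : Set W) : Prop :=
  ∀ u v : W, (s(u, v) ∈ G.edgeSet ∧ G.IsBridge s(u, v)) → InducesSplit G X u v

/-- A network is simple if every cut-edge is trivial, i.e. has a leaf endpoint. -/
def SimpleNet {W : Type*} (G : SimpleGraph W) (X : Set W) : Prop :=
  ∀ u v : W, (s(u, v) ∈ G.edgeSet ∧ G.IsBridge s(u, v)) → u ∈ X ∨ v ∈ X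

/-- A graph is bridgeless if it has no cut-edge. -/
def Bridgeless {W : Type*} (H : SimpleGraph W) : Prop :=
  ∀ e, ¬ (e ∈ H.edgeSet ∧ H.IsBridge e)

/-- A blob of `G`: a maximal connected subgraph without a cut-edge that is not
a single vertex. -/
def IsBlob {W : Type*} (G : SimpleGraph W) (B : G.Subgraph) : Prop :=
  B.verts.Nontrivial ∧ B.Connected ∧ Bridgeless B.coe ∧
    ∀ B' : G.Subgraph, B'.verts.Nontrivial → B'.Connected → Bridgeless B'.coe →
      B ≤ B' → B = B'

/-- The simple network `B_N` associated to a blob `B`: the union of `B` with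
all cut-edges of `G` incident to `B`. -/
def blobNet {W : Type*} (G : SimpleGraph W) (B : G.Subgraph) : G.Subgraph where
  verts := B.verts ∪ {w | ∃ u ∈ B.verts, (s(u, w) ∈ G.edgeSet ∧ G.IsBridge s(u, w))}
  Adj a b := B.Adj a b ∨ ((s(a, b) ∈ G.edgeSet ∧ G.IsBridge s(a, b)) ∧ (a ∈ B.verts ∨ b ∈ B.verts))
  adj_sub := by
    rintro v w (h | ⟨h, -⟩)
    · exact B.adj_sub h
    · exact (SimpleGraph.mem_edgeSet G).mp h.1
  edge_vert := by
    rintro v w (h | ⟨h, hv | hw⟩)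
    · exact Or.inl (B.edge_vert h)
    · exact Or.inl hv
    · exact Or.inr ⟨w, hw, by rwa [Sym2.eq_swap]⟩
  symm := ⟨by
    rintro v w (h | ⟨h, hc⟩)
    · exact Or.inl (B.adj_symm h)
    · exact Or.inr ⟨by rwa [Sym2.eq_swap], hc.symm⟩⟩

/-- The leaf set of `B_N`: endpoints of incident cut-edges not lying in `B`. -/
def blobNetLeaves {W : Type*} (G : SimpleGraph W) (B : G.Subgraph) :
    Set (blobNet G B).verts :=
  {w | (w : W) ∉ B.verts}

/-- `G` is a level-`k` network: at most `k` edges must be removed from each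
blob to obtain a tree. -/
def Level {W : Type*} (G : SimpleGraph W) (k : ℕ) : Prop :=
  ∀ B : G.Subgraph, IsBlob G B → B.edgeSet.ncard ≤ B.verts.ncard - 1 + k
/-- The network `N − x`: delete leaf `x` and its incident edge and suppress the
resulting degree-2 vertex `v` (the former neighbour of `x`). -/
def suppressAdj {V : Type*} (G : SimpleGraph V) (x v : V) :
    SimpleGraph {w : V // w ≠ x ∧ w ≠ v} where
  Adj a b := a ≠ b ∧ (G.Adj a b ∨ (G.Adj v a ∧ G.Adj v b))
  symm := ⟨by
    rintro a b ⟨h1, h2 | ⟨h3, h4⟩⟩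
    · exact ⟨h1.symm, Or.inl h2.symm⟩
    · exact ⟨h1.symm, Or.inr ⟨h4, h3⟩⟩⟩
  loopless := ⟨by rintro a ⟨h1, -⟩; exact h1 rfl⟩

/-- The network `C_e(x,y)`: replace the edge `e = {u,v}` of `C` by a path
`u – w₁ – w₂ – v` and attach pendant leaves `x = Sum.inr 2` to `w₁ = Sum.inr 0`
and `y = Sum.inr 3` to `w₂ = Sum.inr 1`. -/
def extGraph {W : Type*} (C : SimpleGraph W) (u v : W) : SimpleGraph (W ⊕ Fin 4) :=
  SimpleGraph.fromEdgeSet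
    ((Sym2.map Sum.inl) '' (C.edgeSet \ {s(u, v)}) ∪
      {s(Sum.inl u, Sum.inr 0), s(Sum.inr 0, Sum.inr 1), s(Sum.inr 1, Sum.inl v),
       s(Sum.inr 0, Sum.inr 2), s(Sum.inr 1, Sum.inr 3)})

/-- The leaves `x` and `y` of `C_e(x,y)`. -/
def extLeaves (W : Type*) : Set (W ⊕ Fin 4) := {Sum.inr 2, Sum.inr 3}

/-- The Petersen graph, realized as the Kneser graph K(5,2). -/
def petersen : SimpleGraph {s : Finset (Fin 5) // s.card = 2} where
  Adj a b := Disjoint (a : Finset (Fin 5)) (b : Finset (Fin 5))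
  symm := ⟨fun a b h => h.symm⟩
  loopless := ⟨fun a h => by
    have h2 : (a : Finset (Fin 5)) = ∅ := by
      simpa using disjoint_self.mp h
    have := a.2
    rw [h2] at this
    simp at this⟩

/-- `D` is an orientation of the edges of `G`. -/
def IsOrientation {V : Type*} (G : SimpleGraph V) (D : V → V → Prop) : Prop :=
  (∀ u v, G.Adj u v ↔ (D u v ∨ D v u)) ∧ ∀ u v, ¬ (D u v ∧ D v u)

noncomputable def outdeg {α : Type*} (r : α → α → Prop) (v : α) : ℕ := {w | r v w}.ncard
noncomputable def indeg {α : Type*} (r : α → α → Prop) (v : α) : ℕ := {w | r w v}.ncard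

/-- A rooted (binary) phylogenetic network with root `ρ` and leaf set `Y`:
a DAG with a unique root of indegree 0 and outdegree 2, leaves (outdegree 0,
indegree 1) exactly `Y`, and all non-root vertices of total degree 1 or 3. -/
def IsRootedNetwork {α : Type*} (r : α → α → Prop) (ρ : α) (Y : Set α) : Prop :=
  (∀ v, ¬ Relation.TransGen r v v) ∧
  indeg r ρ = 0 ∧ outdeg r ρ = 2 ∧
  (∀ v, indeg r v = 0 → v = ρ) ∧
  (∀ v, v ≠ ρ → indeg r v + outdeg r v = 1 ∨ indeg r v + outdeg r v = 3) ∧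
  {v | outdeg r v = 0} = Y ∧ (∀ v ∈ Y, indeg r v = 1)

/-- A rooted network is tree-based if it contains a spanning arborescence
rooted at `ρ` whose leaf set is `Y`. -/
def RootedTreeBased {α : Type*} (r : α → α → Prop) (ρ : α) (Y : Set α) : Prop :=
  ∃ t : α → α → Prop, (∀ a b, t a b → r a b) ∧
    (∀ v, Relation.ReflTransGen t ρ v) ∧
    (∀ v, v ≠ ρ → indeg t v = 1) ∧ indeg t ρ = 0 ∧
    {v | outdeg t v = 0} = Y

/-- `T` is obtained from `T'` by suppressing all degree-2 vertices, via the
embedding `f` of the vertices of `T` into those of `T'`. -/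
def Suppresses {A B : Type*} (T' : SimpleGraph A) (T : SimpleGraph B) (f : B → A) : Prop :=
  Function.Injective f ∧
  (∀ a : A, deg T' a ≠ 2 → a ∈ Set.range f) ∧
  (∀ b : B, deg T' (f b) ≠ 2) ∧
  ∀ b b' : B, T.Adj b b' ↔
    ∃ p : T'.Walk (f b) (f b'), p.IsPath ∧
      ∀ a ∈ p.support, a ≠ f b → a ≠ f b' → deg T' a = 2

/-- `G` is fully tree-based on `X`: every subtree of `G` whose leaf set is `X`
is spanning (hence a support-tree). -/
def FullyTreeBased {W : Type*} (G : SimpleGraph W) (X : Set W) : Prop :=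
  ∀ H : G.Subgraph, H.Connected → H.coe.IsAcyclic →
    {v | v ∈ H.verts ∧ (H.neighborSet v).ncard ≤ 1} = X → H.IsSpanning

/-!
In a level-2 blob the number of edges exceeds that of a spanning tree by at most two, and when two
deleted edges share a vertex one of them can be exchanged against a tree edge so that they become
disjoint. So every blob `B` contains a matching `F B` whose deletion leaves a spanning tree of `B`.
Distinct blobs are vertex-disjoint and every cycle of `G` lies in a single blob, so deleting the
union of the `F B` leaves a spanning tree `T` of `G`, and the union is still a matching. Deleting a
matching lowers each degree by at most one, and it cannot touch a leaf without isolating it in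
`T`; since all other vertices have degree 3, the leaves of `T` are exactly `X`.
-/

namespace SimpleGraph

variable {V : Type*}

def IsEdgeMatching (F : Set (Sym2 V)) : Prop :=
  F.Pairwise fun e f => ∀ x ∈ e, x ∉ f

def HasMatchingCotree (G : SimpleGraph V) : Prop :=
  ∃ F ⊆ G.edgeSet, IsEdgeMatching F ∧ (G.deleteEdges F).IsTree

def Subgraph.HasMatchingCotree {G : SimpleGraph V} (B : G.Subgraph) : Prop :=
  ∃ F ⊆ B.edgeSet, IsEdgeMatching F ∧ (B.deleteEdges F).coe.IsTree

lemma isEdgeMatching_pair {a b c d : V} (hac : a ≠ c) (had : a ≠ d) (hbc : b ≠ c)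
    (hbd : b ≠ d) : IsEdgeMatching {s(a, b), s(c, d)} := by
  have key : ∀ x ∈ s(a, b), x ∉ s(c, d) := by
    simp only [Sym2.mem_iff]
    rintro x (rfl | rfl) (rfl | rfl) <;> contradiction
  rintro e (rfl | rfl) f (rfl | rfl) hef x hxe hxf
  · exact hef rfl
  · exact key x hxe hxf
  · exact key x hxf hxe
  · exact hef rfl

lemma IsEdgeMatching.image {W : Type*} {F : Set (Sym2 W)} (hF : IsEdgeMatching F) {f : W → V}
    (hf : Function.Injective f) : IsEdgeMatching (Sym2.map f '' F) := by
  rintro _ ⟨e, he, rfl⟩ _ ⟨e', he', rfl⟩ hne _ hx hx'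
  obtain ⟨y, hy, rfl⟩ := Sym2.mem_map.mp hx
  obtain ⟨y', hy', hyy'⟩ := Sym2.mem_map.mp hx'
  exact hF he he' (fun h => hne (h ▸ rfl)) y hy (hf hyy' ▸ hy')

variable {G : SimpleGraph V}

namespace Subgraph

lemma exists_isCycle_coe_of_toSubgraph_le {K : G.Subgraph} {u : V} {c : G.Walk u u}
    (hc : c.IsCycle) (h : c.toSubgraph ≤ K) :
    ∃ (hu : u ∈ K.verts) (c' : K.coe.Walk ⟨u, hu⟩ ⟨u, hu⟩), c'.IsCycle ∧
      c.edges = c'.edges.map (Sym2.map Subtype.val) := by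
  have hu : u ∈ K.verts := h.1 c.start_mem_verts_toSubgraph
  let c' : K.coe.Walk ⟨u, hu⟩ ⟨u, hu⟩ := c.mapToSubgraph.map (Subgraph.inclusion h)
  have hmap : c'.map K.hom = c := (Walk.map_map _ _ _).trans c.map_mapToSubgraph_hom
  refine ⟨hu, c', ?_, ?_⟩
  · exact (Walk.isCycle_map_iff_of_injective K.hom_injective).mp (hmap.symm ▸ hc)
  · exact (congrArg Walk.edges hmap).symm.trans (Walk.edges_map _ _)

lemma toSubgraph_map_hom_le {K : G.Subgraph} {a b : K.verts} (c : K.coe.Walk a b) :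
    (c.map K.hom).toSubgraph ≤ K := by
  rw [Walk.toSubgraph_map]
  exact (map_mono le_top).trans K.map_hom_top.le

theorem bridgeless_coe_iff {K : G.Subgraph} : Bridgeless K.coe ↔
    ∀ ⦃a b⦄, K.Adj a b →
      ∃ (u : V) (c : G.Walk u u), c.IsCycle ∧ s(a, b) ∈ c.edges ∧ c.toSubgraph ≤ K := by
  refine ⟨fun hK a b hab => ?_, fun hK e => ?_⟩
  · have hnb : ¬ K.coe.IsBridge s(⟨a, K.edge_vert hab⟩, ⟨b, K.edge_vert hab.symm⟩) :=
      fun hb => hK _ ⟨hab, hb⟩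
    rw [isBridge_iff_forall_cycle_notMem hab] at hnb
    push Not at hnb
    obtain ⟨u, c, hc, he⟩ := hnb
    exact ⟨u, c.map K.hom, hc.map K.hom_injective,
      Walk.edges_map _ _ ▸ List.mem_map_of_mem he, toSubgraph_map_hom_le c⟩
  · induction e using Sym2.ind with
    | _ a b =>
    rintro ⟨hab, hb⟩
    obtain ⟨u, c, hc, he, hle⟩ := hK hab
    obtain ⟨_, c', hc', hedges⟩ := exists_isCycle_coe_of_toSubgraph_le hc hle
    rw [hedges, List.mem_map] at he
    obtain ⟨e', he', hee'⟩ := he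
    rw [show e' = s(a, b) from Sym2.map.injective Subtype.val_injective hee'] at he'
    exact hb.notMem_edges_of_isCycle hc' he'

end Subgraph

lemma Walk.IsCycle.bridgeless_toSubgraph {u : V} {c : G.Walk u u} (hc : c.IsCycle) :
    Bridgeless c.toSubgraph.coe :=
  Subgraph.bridgeless_coe_iff.mpr fun _ _ hab =>
    ⟨u, c, hc, Walk.adj_toSubgraph_iff_mem_edges.mp hab, le_rfl⟩

lemma Subgraph.bridgeless_sup {B₁ B₂ : G.Subgraph} (h₁ : Bridgeless B₁.coe)
    (h₂ : Bridgeless B₂.coe) : Bridgeless (B₁ ⊔ B₂).coe := by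
  rw [Subgraph.bridgeless_coe_iff] at h₁ h₂ ⊢
  rintro a b (hab | hab)
  · obtain ⟨u, c, hc, he, hle⟩ := h₁ hab
    exact ⟨u, c, hc, he, hle.trans le_sup_left⟩
  · obtain ⟨u, c, hc, he, hle⟩ := h₂ hab
    exact ⟨u, c, hc, he, hle.trans le_sup_right⟩

lemma _root_.IsBlob.eq_of_mem_verts {B₁ B₂ : G.Subgraph} (hB₁ : IsBlob G B₁)
    (hB₂ : IsBlob G B₂) {x : V} (hx₁ : x ∈ B₁.verts) (hx₂ : x ∈ B₂.verts) :
    B₁ = B₂ := by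
  have hc : (B₁ ⊔ B₂).Connected :=
    Subgraph.connected_sup hB₁.2.1.preconnected hB₂.2.1.preconnected ⟨x, hx₁, hx₂⟩
  have hbl := Subgraph.bridgeless_sup hB₁.2.2.1 hB₂.2.2.1
  have hnt : (B₁ ⊔ B₂).verts.Nontrivial := hB₁.1.mono Set.subset_union_left
  exact (hB₁.2.2.2 _ hnt hc hbl le_sup_left).trans
    (hB₂.2.2.2 _ hnt hc hbl le_sup_right).symm

lemma _root_.IsBlob.mem_of_mem_iUnion₂ {F : G.Subgraph → Set (Sym2 V)}
    (hFB : ∀ B, IsBlob G B → F B ⊆ B.edgeSet) {B : G.Subgraph} (hB : IsBlob G B) {e : Sym2 V}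
    (he : e ∈ ⋃ (B') (_ : IsBlob G B'), F B') {x : V} (hx : x ∈ e) (hxB : x ∈ B.verts) :
    e ∈ F B := by
  obtain ⟨B', hB', heB'⟩ := Set.mem_iUnion₂.mp he
  rwa [hB.eq_of_mem_verts hB' hxB (B'.mem_verts_of_mem_edge (hFB B' hB' heB') hx)]

lemma Connected.of_forall_adj_reachable {K : SimpleGraph V} (hG : G.Connected)
    (h : ∀ ⦃a b⦄, G.Adj a b → K.Reachable a b) : K.Connected := by
  refine (connected_iff _).mpr ⟨fun a b => ?_, hG.nonempty⟩
  obtain ⟨p⟩ := hG.preconnected a b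
  induction p with
  | nil => rfl
  | cons hadj _ ih => exact (h hadj).trans ih

lemma neighborSet_deleteEdges_of_mem {F : Set (Sym2 V)} (hF : IsEdgeMatching F) {v w : V}
    (hvw : s(v, w) ∈ F) : (G.deleteEdges F).neighborSet v = G.neighborSet v \ {w} := by
  ext x
  simp only [mem_neighborSet, deleteEdges_adj, Set.mem_sdiff, Set.mem_singleton_iff]
  refine and_congr_right fun hvx => ⟨fun h hxw => h (hxw ▸ hvw), fun hxw hvxF => ?_⟩
  refine hF hvxF hvw (fun h => hxw (Sym2.congr_right.mp h)) v (Sym2.mem_mk_left _ _)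
    (Sym2.mem_mk_left _ _)

lemma neighborSet_deleteEdges_of_forall_notMem {F : Set (Sym2 V)} {v : V}
    (hv : ∀ e ∈ F, v ∉ e) : (G.deleteEdges F).neighborSet v = G.neighborSet v := by
  ext x
  simpa using fun _ hvx => hv _ hvx (Sym2.mem_mk_left _ _)

variable [Finite V]

lemma Connected.isTree_of_ncard_edgeSet_lt (hc : G.Connected)
    (h : G.edgeSet.ncard < Nat.card V) : G.IsTree := by
  have := hc.card_vert_le_card_edgeSet_add_one
  rw [Nat.card_coe_set_eq] at this
  exact isTree_iff_connected_and_card.mpr ⟨hc, by rw [Nat.card_coe_set_eq]; omega⟩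

lemma Connected.isTree_deleteEdges_of_mem_edges_of_isCycle (hc : G.Connected)
    (h : G.edgeSet.ncard ≤ Nat.card V) {u : V} {c : G.Walk u u} (hcyc : c.IsCycle)
    {e : Sym2 V} (he : e ∈ c.edges) : (G.deleteEdges {e}).IsTree := by
  induction e using Sym2.ind with
  | _ a b =>
  have hnb : ¬ G.IsBridge s(a, b) := fun hb => hb.notMem_edges_of_isCycle hcyc he
  refine (hc.connected_delete_edge_of_not_isBridge hnb).isTree_of_ncard_edgeSet_lt ?_
  rw [edgeSet_deleteEdges, Set.ncard_sdiff_singleton_of_mem (c.edges_subset_edgeSet he)]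
  have : 0 < G.edgeSet.ncard :=
    (Set.ncard_pos (Set.toFinite _)).mpr ⟨_, c.edges_subset_edgeSet he⟩
  omega

/-- The non-tree edges `s(v, p)` and `s(v, q)` share `v`. The first edge `s(p, x)` of the tree path
from `p` to `v` lies on the cycle that `s(v, p)` closes, so deleting `s(p, x)` and `s(v, q)` from
`H` leaves a spanning tree, and `x ≠ q` makes these two edges disjoint. -/
lemma hasMatchingCotree_of_exchange {H S : SimpleGraph V} (hS : S.IsTree) (hSH : S ≤ H)
    (hm : H.edgeSet.ncard ≤ Nat.card V + 1) {v p q x : V} (hvp : H.Adj v p) (hvq : H.Adj v q)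
    (hpq : p ≠ q) (hvpS : ¬ S.Adj v p) (hvqS : ¬ S.Adj v q) (hpx : S.Adj p x) (hxq : x ≠ q)
    {P : S.Walk x v} (hP : (Walk.cons hpx P).IsPath) : HasMatchingCotree H := by
  set A := H.deleteEdges {s(v, q)}
  have hSA : S ≤ A := fun a b hab => (deleteEdges_adj ..).mpr ⟨hSH hab, fun h => hvqS <| by
    rw [← mem_edgeSet, ← Set.mem_singleton_iff.mp h]; exact hab⟩
  have hA : A.Connected := hS.connected.mono hSA
  have hAm : A.edgeSet.ncard ≤ Nat.card V := by
    rw [edgeSet_deleteEdges, Set.ncard_sdiff_singleton_of_mem (show s(v, q) ∈ H.edgeSet from hvq)]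
    omega
  have hvpA : A.Adj v p := (deleteEdges_adj ..).mpr ⟨hvp, fun h => hpq (Sym2.congr_right.mp h)⟩
  have hcyc : (Walk.cons hvpA ((Walk.cons hpx P).mapLe hSA)).IsCycle :=
    Path.cons_isCycle ⟨_, hP.mapLe hSA⟩ hvpA (by
      rw [Walk.edges_mapLe_eq_edges, Sym2.eq_swap]
      exact fun h => hvpS (Walk.adj_of_mem_edges _ h).symm)
  have hT := hA.isTree_deleteEdges_of_mem_edges_of_isCycle hAm hcyc (e := s(p, x)) (by simp)
  rw [deleteEdges_deleteEdges] at hT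
  have hxv : x ≠ v := by rintro rfl; exact hvpS hpx.symm
  refine ⟨{s(p, x), s(v, q)}, ?_, isEdgeMatching_pair hvp.ne.symm hpq hxv hxq, ?_⟩
  · rintro e (rfl | rfl)
    exacts [hSH hpx, hvq]
  · convert hT using 2
    ext e; simp [or_comm]

lemma Connected.hasMatchingCotree_of_ncard_edgeSet_le {H : SimpleGraph V} (hc : H.Connected)
    (hm : H.edgeSet.ncard ≤ Nat.card V + 1) : H.HasMatchingCotree := by
  obtain ⟨S, hSH, hS⟩ := hc.exists_isTree_le
  by_cases hR : IsEdgeMatching (H.edgeSet \ S.edgeSet)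
  · refine ⟨_, Set.sdiff_subset, hR, ?_⟩
    convert hS
    ext a b
    simp only [deleteEdges_adj, Set.mem_sdiff, mem_edgeSet, not_and, not_not]
    exact ⟨fun h => h.2 h.1, fun h => ⟨hSH h, fun _ => h⟩⟩
  obtain ⟨e, heH, heS, f, hfH, hfS, hef, v, hve, hvf⟩ :
      ∃ e ∈ H.edgeSet, e ∉ S.edgeSet ∧
        ∃ f ∈ H.edgeSet, f ∉ S.edgeSet ∧ e ≠ f ∧ ∃ x ∈ e, x ∈ f := by
    simpa [IsEdgeMatching, Set.Pairwise] using hR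
  obtain ⟨p, rfl⟩ := Sym2.mem_iff_exists.mp hve
  obtain ⟨q, rfl⟩ := Sym2.mem_iff_exists.mp hvf
  have hpq : p ≠ q := fun h => hef (h ▸ rfl)
  obtain ⟨P, hP⟩ := (hS.connected.preconnected p v).exists_isPath
  cases P with
  | nil => exact (heH.ne rfl).elim
  | @cons _ x _ hpx P =>
    by_cases hxq : x = q
    · subst hxq
      rw [Walk.cons_isPath_iff] at hP
      cases P with
      | nil => exact (hfH.ne rfl).elim
      | cons hxz P' =>
        exact hasMatchingCotree_of_exchange hS hSH hm hfH heH hpq.symm hfS heS hxz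
          (by rintro rfl; exact hP.2 (by simp)) hP.1
    · exact hasMatchingCotree_of_exchange hS hSH hm heH hfH hpq heS hfS hpx hxq hP

lemma Subgraph.Connected.hasMatchingCotree_of_ncard_edgeSet_le {B : G.Subgraph}
    (hc : B.Connected) (h : B.edgeSet.ncard ≤ B.verts.ncard + 1) : B.HasMatchingCotree := by
  have hm : B.coe.edgeSet.ncard ≤ Nat.card B.verts + 1 := by
    rwa [Nat.card_coe_set_eq, ← Set.ncard_image_of_injective _
      (Sym2.map.injective Subtype.val_injective), Subgraph.image_coe_edgeSet_coe]
  obtain ⟨F, hFB, hF, hT⟩ := hc.coe.hasMatchingCotree_of_ncard_edgeSet_le hm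
  refine ⟨Sym2.map Subtype.val '' F, ?_, hF.image Subtype.val_injective, ?_⟩
  · exact B.image_coe_edgeSet_coe ▸ Set.image_mono hFB
  · rwa [← Subgraph.deleteEdges_coe_eq]

lemma exists_isBlob_ge {C : G.Subgraph} (hnt : C.verts.Nontrivial) (hc : C.Connected)
    (hbl : Bridgeless C.coe) : ∃ B, IsBlob G B ∧ C ≤ B := by
  obtain ⟨B, ⟨hCB, hBnt, hBc, hBbl⟩, hmax⟩ := Set.Finite.exists_maximalFor id
    {B : G.Subgraph | C ≤ B ∧ B.verts.Nontrivial ∧ B.Connected ∧ Bridgeless B.coe}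
    (Set.toFinite _) ⟨C, le_rfl, hnt, hc, hbl⟩
  exact ⟨B, ⟨hBnt, hBc, hBbl, fun B' hnt' hc' hbl' hle =>
    le_antisymm hle (hmax ⟨hCB.trans hle, hnt', hc', hbl'⟩ hle)⟩, hCB⟩

lemma Walk.IsCycle.exists_isBlob_toSubgraph_le {u : V} {c : G.Walk u u} (hc : c.IsCycle) :
    ∃ B, IsBlob G B ∧ c.toSubgraph ≤ B := by
  refine exists_isBlob_ge ?_ c.toSubgraph_connected hc.bridgeless_toSubgraph
  have hadj := c.toSubgraph_adj_snd hc.not_nil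
  exact ⟨u, hadj.fst_mem, c.snd, hadj.snd_mem, hadj.ne⟩

theorem Connected.hasMatchingCotree_of_forall_isBlob (hc : G.Connected)
    (h : ∀ B, IsBlob G B → B.HasMatchingCotree) : G.HasMatchingCotree := by
  choose! F hFB hF hT using h
  set F₀ := ⋃ (B) (_ : IsBlob G B), F B
  have hFverts : ∀ B, IsBlob G B → ∀ e ∈ F B, ∀ x ∈ e, x ∈ B.verts :=
    fun B hB _ he _ hx => B.mem_verts_of_mem_edge (hFB B hB he) hx
  refine ⟨F₀, Set.iUnion₂_subset fun B hB => (hFB B hB).trans B.edgeSet_subset, ?_, ?_, ?_⟩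
  · intro e he f hf hne x hxe hxf
    obtain ⟨B, hB, heB⟩ := Set.mem_iUnion₂.mp he
    exact hF B hB heB (hB.mem_of_mem_iUnion₂ hFB hf hxf (hFverts B hB e heB x hxe)) hne x hxe hxf
  · refine hc.of_forall_adj_reachable fun a b hab => ?_
    by_cases habF : s(a, b) ∈ F₀
    · obtain ⟨B, hB, habB⟩ := Set.mem_iUnion₂.mp habF
      let φ : (B.deleteEdges (F B)).coe →g G.deleteEdges F₀ :=
        ⟨Subtype.val, fun {x y} hxy => (deleteEdges_adj ..).mpr ⟨B.adj_sub hxy.1,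
          fun hxyF => hxy.2 (hB.mem_of_mem_iUnion₂ hFB hxyF (Sym2.mem_mk_left _ _) x.2)⟩⟩
      exact ((hT B hB).connected.preconnected
        ⟨a, hFverts B hB _ habB a (Sym2.mem_mk_left _ _)⟩
        ⟨b, hFverts B hB _ habB b (Sym2.mem_mk_right _ _)⟩).map φ
    · exact Adj.reachable ((deleteEdges_adj ..).mpr ⟨hab, habF⟩)
  · intro u c hcyc
    have hcyc' := hcyc.mapLe (deleteEdges_le F₀)
    obtain ⟨B, hB, hle⟩ := hcyc'.exists_isBlob_toSubgraph_le
    have hle' : (c.mapLe (deleteEdges_le F₀)).toSubgraph ≤ B.deleteEdges (F B) := by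
      refine ⟨hle.1, fun x y hxy =>
        (Subgraph.deleteEdges_adj ..).mpr ⟨hle.2 hxy, fun hF => ?_⟩⟩
      rw [Walk.adj_toSubgraph_iff_mem_edges, Walk.edges_mapLe_eq_edges] at hxy
      exact ((deleteEdges_adj ..).mp (c.adj_of_mem_edges hxy)).2
        (Set.mem_iUnion₂.mpr ⟨B, hB, hF⟩)
    obtain ⟨_, c', hc', -⟩ := Subgraph.exists_isCycle_coe_of_toSubgraph_le hcyc' hle'
    exact (hT B hB).isAcyclic c' hc'

lemma setOf_deg_deleteEdges_le_one {F : Set (Sym2 V)} (hdeg : ∀ v, deg G v ≤ 1 ∨ deg G v = 3)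
    (hFG : F ⊆ G.edgeSet) (hF : IsEdgeMatching F) (hT : (G.deleteEdges F).Connected) :
    {v | deg (G.deleteEdges F) v ≤ 1} = {v | deg G v ≤ 1} := by
  ext v
  simp only [Set.mem_ofPred_eq, deg]
  by_cases hv : ∃ e ∈ F, v ∈ e
  · obtain ⟨_, hvw, w, rfl⟩ := hv
    have hvw' : G.Adj v w := hFG hvw
    have hpos :=
      ((hT.preconnected v w).nonempty_neighborSet_left hvw'.ne).ncard_pos (Set.toFinite _)
    rw [neighborSet_deleteEdges_of_mem hF hvw] at hpos ⊢
    have :=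
      Set.ncard_sdiff_singleton_add_one (show w ∈ G.neighborSet v from hvw') (Set.toFinite _)
    have := hdeg v
    unfold deg at this
    omega
  · push Not at hv
    rw [neighborSet_deleteEdges_of_forall_notMem hv]

end SimpleGraph

theorem stmt5_general {V : Type*} [Fintype V] (G : SimpleGraph V) (X : Set V)
    (hN : IsNetwork G X) (hL : Level G 2) :
    TreeBased G X := by
  obtain ⟨hc, hdeg, rfl⟩ := hN
  have hblob : ∀ B, IsBlob G B → B.edgeSet.ncard ≤ B.verts.ncard + 1 := fun B hB => by
    have := hL B hB
    have := Set.one_lt_ncard_iff_nontrivial.mpr hB.1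
    omega
  obtain ⟨F, hFG, hF, hT⟩ := hc.hasMatchingCotree_of_forall_isBlob fun B hB =>
    hB.2.1.hasMatchingCotree_of_ncard_edgeSet_le (hblob B hB)
  exact ⟨G.deleteEdges F, deleteEdges_le F, hT,
    setOf_deg_deleteEdges_le_one hdeg hFG hF hT.connected⟩

/-- Every proper level-2 network is tree-based. -/
theorem stmt5 {V : Type*} [Fintype V] (G : SimpleGraph V) (X : Set V)
    (hN : IsNetwork G X) (hP : ProperNet G X) (hL : Level G 2) :
    TreeBased G X :=
  stmt5_general G X hN hL
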